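/- For C ∈ SU(3), let ĵ(C) ∈ SU(4) denote the block-diagonal matrix diag(1, C) (upper-left 1×1 block equal to 1, lower-right 3×3 block C, off-diagonal blocks zero). Then d(ĵ(C)) ≥ 2 if and only if C = diag(−1,−1,1), and in that case d(ĵ(C)) = 2. In other words, the intersection of the closure of Y₂ with the image of ĵ equals the single matrix diag(1,−1,−1,1), and this matrix lies in Y₂. -/

import Mathlib

/-- The intersection of the `(-1)`-eigenspace of a `4 × 4` complex matrix `A` with the span
of the first three standard basis vectors: `{x ∈ ℂ⁴ : A·x = -x and x₃ = 0}`. -/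
noncomputable def Espace (A : Matrix (Fin 4) (Fin 4) ℂ) : Submodule ℂ (Fin 4 → ℂ) :=
  LinearMap.ker (A.mulVecLin + LinearMap.id) ⊓
    LinearMap.ker (LinearMap.proj (R := ℂ) (φ := fun _ : Fin 4 => ℂ) (3 : Fin 4))

/-- `d(A) = dim_ℂ E(A)`. -/
noncomputable def eigDim (A : Matrix (Fin 4) (Fin 4) ℂ) : ℕ :=
  Module.finrank ℂ (Espace A)

/-- The block-diagonal embedding `ĵ : SU(3) → SU(4)`, `ĵ(C) = diag(1, C)`. -/
noncomputable def jMat (C : Matrix (Fin 3) (Fin 3) ℂ) : Matrix (Fin 4) (Fin 4) ℂ :=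
  Matrix.reindex finSumFinEquiv finSumFinEquiv
    (Matrix.fromBlocks (1 : Matrix (Fin 1) (Fin 1) ℂ) 0 0 C)

/-!
For `x ∈ E(ĵ(C))` the first row of `ĵ(C)` forces `x₁ = 0`, and `x₄ = 0` by definition, so
`E(ĵ(C))` lies in the plane spanned by `e₂, e₃` and `d(ĵ(C)) ≤ 2`. Equality holds exactly when
`e₁, e₂ ∈ ℂ³` are `(-1)`-eigenvectors of `C`. For `C` unitary they are then also
`(-1)`-eigenvectors of `Cᴴ`, which kills the rest of the first two rows, so
`C = diag(-1, -1, c)`, and `det C = 1` gives `c = 1`.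
-/

open Matrix Module

theorem Fin.cons_zero_single_eq_single_succ {n : ℕ} {M : Type*} [Zero M] (i : Fin n) (y : M) :
    (Fin.cons 0 (Pi.single i y) : Fin (n + 1) → M) = Pi.single i.succ y := by
  ext j
  cases j using Fin.cases <;> simp [Pi.single_apply]

theorem Matrix.conjTranspose_mulVec_eq_neg_of_mem_unitaryGroup {n α : Type*} [Fintype n]
    [DecidableEq n] [CommRing α] [StarRing α] {U : Matrix n n α} (hU : U ∈ unitaryGroup n α)
    {v : n → α} (hv : U *ᵥ v = -v) : Uᴴ *ᵥ v = -v := by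
  calc Uᴴ *ᵥ v = -(Uᴴ *ᵥ (U *ᵥ v)) := by rw [hv, mulVec_neg, neg_neg]
    _ = -v := by
      rw [mulVec_mulVec, ← star_eq_conjTranspose, mem_unitaryGroup_iff'.mp hU, one_mulVec]

lemma mem_Espace_iff {A : Matrix (Fin 4) (Fin 4) ℂ} {x : Fin 4 → ℂ} :
    x ∈ Espace A ↔ A *ᵥ x = -x ∧ x 3 = 0 := by
  simp [Espace, eq_neg_iff_add_eq_zero]

@[simp] lemma jMat_zero_zero (C : Matrix (Fin 3) (Fin 3) ℂ) : jMat C 0 0 = 1 := rfl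

@[simp] lemma jMat_zero_succ (C : Matrix (Fin 3) (Fin 3) ℂ) (j : Fin 3) :
    jMat C 0 j.succ = 0 := by
  fin_cases j <;> rfl

@[simp] lemma jMat_succ_zero (C : Matrix (Fin 3) (Fin 3) ℂ) (i : Fin 3) :
    jMat C i.succ 0 = 0 := by
  fin_cases i <;> rfl

@[simp] lemma jMat_succ_succ (C : Matrix (Fin 3) (Fin 3) ℂ) (i j : Fin 3) :
    jMat C i.succ j.succ = C i j := by
  fin_cases i <;> fin_cases j <;> rfl

lemma jMat_mulVec_cons (C : Matrix (Fin 3) (Fin 3) ℂ) (a : ℂ) (v : Fin 3 → ℂ) :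
    jMat C *ᵥ Fin.cons a v = Fin.cons a (C *ᵥ v) := by
  ext i
  cases i using Fin.cases <;> simp [mulVec, dotProduct, Fin.sum_univ_succ (n := 3)]

lemma cons_mem_Espace_jMat_iff {C : Matrix (Fin 3) (Fin 3) ℂ} {a : ℂ} {v : Fin 3 → ℂ} :
    Fin.cons a v ∈ Espace (jMat C) ↔ a = 0 ∧ C *ᵥ v = -v ∧ v 2 = 0 := by
  have neg_cons : -(Fin.cons a v : Fin 4 → ℂ) = Fin.cons (-a) (-v) := by
    ext i
    cases i using Fin.cases <;> simp
  rw [mem_Espace_iff, jMat_mulVec_cons, neg_cons, Fin.cons_inj, self_eq_neg, and_assoc]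
  rfl

/-- The plane spanned by `e₂, e₃` in the statement's numbering of the basis of `ℂ⁴`. -/
noncomputable def coordPlane12 : Submodule ℂ (Fin 4 → ℂ) :=
  Submodule.span ℂ {Pi.single 1 1, Pi.single 2 1}

lemma finrank_coordPlane12 : finrank ℂ coordPlane12 = 2 := by
  have hli : LinearIndependent ℂ ![(Pi.single 1 1 : Fin 4 → ℂ), Pi.single 2 1] := by
    refine LinearIndependent.pair_iff.mpr fun s t hst => ⟨?_, ?_⟩
    · simpa using congrFun hst 1
    · simpa using congrFun hst 2
  rw [coordPlane12, ← range_cons_cons_empty, finrank_span_eq_card hli]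
  rfl

lemma Espace_jMat_le_coordPlane12 (C : Matrix (Fin 3) (Fin 3) ℂ) :
    Espace (jMat C) ≤ coordPlane12 := by
  intro x hx
  rw [← Fin.cons_self_tail x, cons_mem_Espace_jMat_iff] at hx
  obtain ⟨hx0, -, hx3 : x 3 = 0⟩ := hx
  refine Submodule.mem_span_pair.mpr ⟨x 1, x 2, ?_⟩
  ext i
  fin_cases i <;> simp [hx0, hx3]

lemma single_succ_mem_Espace_jMat_iff {C : Matrix (Fin 3) (Fin 3) ℂ} {k : Fin 3} (hk : k ≠ 2) :
    Pi.single k.succ 1 ∈ Espace (jMat C) ↔ C *ᵥ Pi.single k 1 = -Pi.single k 1 := by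
  rw [← Fin.cons_zero_single_eq_single_succ, cons_mem_Espace_jMat_iff]
  simp [hk.symm]

lemma two_le_eigDim_jMat_iff (C : Matrix (Fin 3) (Fin 3) ℂ) :
    2 ≤ eigDim (jMat C) ↔
      C *ᵥ Pi.single 0 1 = -Pi.single 0 1 ∧ C *ᵥ Pi.single 1 1 = -Pi.single 1 1 := by
  have hle := Espace_jMat_le_coordPlane12 C
  calc 2 ≤ eigDim (jMat C) ↔ Espace (jMat C) = coordPlane12 := by
        rw [eigDim, ← finrank_coordPlane12]
        exact ⟨Submodule.eq_of_le_of_finrank_le hle, fun h => h ▸ le_rfl⟩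
    _ ↔ coordPlane12 ≤ Espace (jMat C) := (hle.ge_iff_eq).symm
    _ ↔ _ := by
        rw [coordPlane12, Submodule.span_le, Set.insert_subset_iff, Set.singleton_subset_iff]
        exact and_congr (single_succ_mem_Espace_jMat_iff (k := 0) (by decide))
          (single_succ_mem_Espace_jMat_iff (k := 1) (by decide))

lemma eigDim_jMat_le_two (C : Matrix (Fin 3) (Fin 3) ℂ) : eigDim (jMat C) ≤ 2 :=
  finrank_coordPlane12 ▸ Submodule.finrank_mono (Espace_jMat_le_coordPlane12 C)

lemma eq_diagonal_of_mem_specialUnitaryGroup {C : Matrix (Fin 3) (Fin 3) ℂ}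
    (hC : C ∈ specialUnitaryGroup (Fin 3) ℂ) (h0 : C *ᵥ Pi.single 0 1 = -Pi.single 0 1)
    (h1 : C *ᵥ Pi.single 1 1 = -Pi.single 1 1) : C = diagonal ![-1, -1, 1] := by
  obtain ⟨hU, hdet⟩ := mem_specialUnitaryGroup_iff.mp hC
  have r0 := conjTranspose_mulVec_eq_neg_of_mem_unitaryGroup hU h0
  have r1 := conjTranspose_mulVec_eq_neg_of_mem_unitaryGroup hU h1
  obtain ⟨c00, c10, c20⟩ : C 0 0 = -1 ∧ C 1 0 = 0 ∧ C 2 0 = 0 := by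
    simpa [funext_iff, Fin.forall_fin_succ] using h0
  obtain ⟨c01, c11, c21⟩ : C 0 1 = 0 ∧ C 1 1 = -1 ∧ C 2 1 = 0 := by
    simpa [funext_iff, Fin.forall_fin_succ] using h1
  have c02 : C 0 2 = 0 := by simpa using congrFun r0 2
  have c12 : C 1 2 = 0 := by simpa using congrFun r1 2
  have hC : C = diagonal ![-1, -1, C 2 2] := by
    ext i j
    fin_cases i <;> fin_cases j <;> simp [c00, c10, c20, c01, c11, c21, c02, c12]
  have hC22 : C 2 2 = 1 := by
    rw [hC] at hdet
    simpa [Fin.prod_univ_three] using hdet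
  rw [hC, hC22]

/-- For `C ∈ SU(3)`, `d(ĵ(C)) ≥ 2` iff `C = diag(-1,-1,1)`, and in that case `d(ĵ(C)) = 2`;
i.e. the closure of `Y₂` meets the image of `ĵ` exactly in `diag(1,-1,-1,1)`, which
lies in `Y₂`. -/
theorem closure_Y2_inter_j :
    (∀ C : Matrix (Fin 3) (Fin 3) ℂ, C ∈ Matrix.specialUnitaryGroup (Fin 3) ℂ →
      (2 ≤ eigDim (jMat C) ↔ C = Matrix.diagonal ![-1, -1, 1])) ∧
    eigDim (jMat (Matrix.diagonal ![-1, -1, 1])) = 2 := by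
  have hdiag : 2 ≤ eigDim (jMat (diagonal ![-1, -1, 1])) :=
    (two_le_eigDim_jMat_iff _).mpr (by simp [Pi.single_neg])
  refine ⟨fun C hC => ⟨fun h => ?_, fun h => h ▸ hdiag⟩, (eigDim_jMat_le_two _).antisymm hdiag⟩
  obtain ⟨h0, h1⟩ := (two_le_eigDim_jMat_iff C).mp h
  exact eq_diagonal_of_mem_specialUnitaryGroup hC h0 h1
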